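/- For all real numbers a ≥ 1, b ≥ 1 and λ ≥ 1, one has the subscaling inequality d(λ·a, b) ≤ λ·d(a,b). -/
import Mathlib

/-- `Nseq a b k` is the `k`-th term (indexed from 0) of the nondecreasing sequence listing,
with multiplicities, all numbers `m*a + n*b` with `m n : ℕ`; equivalently the least `t ≥ 0`
such that there are at least `k+1` pairs `(m,n)` with `m*a + n*b ≤ t`. -/
noncomputable def Nseq (a b : ℝ) (k : ℕ) : ℝ :=
  sInf {t : ℝ | 0 ≤ t ∧ k + 1 ≤ {p : ℕ × ℕ | (p.1 : ℝ) * a + (p.2 : ℝ) * b ≤ t}.ncard}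

/-- `Mseq c d k = min {m*c + n*d : (m+1)*(n+1) ≥ k+1}`. -/
noncomputable def Mseq (c d : ℝ) (k : ℕ) : ℝ :=
  sInf {t : ℝ | ∃ m n : ℕ, k + 1 ≤ (m + 1) * (n + 1) ∧ t = (m : ℝ) * c + (n : ℝ) * d}

/-- `dFun a b = inf {λ > 0 : N_k(1,a) ≤ λ M_k(1,b) for all k}`. -/
noncomputable def dFun (a b : ℝ) : ℝ :=
  sInf {l : ℝ | 0 < l ∧ ∀ k : ℕ, Nseq 1 a k ≤ l * Mseq 1 b k}

lemma finite_pairs (c d t : ℝ) (hc : 0 < c) (hd : 0 < d) :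
    {p : ℕ × ℕ | (p.1 : ℝ) * c + (p.2 : ℝ) * d ≤ t}.Finite := by
  apply Set.Finite.subset (Set.finite_Iic (⌊t / c⌋₊, ⌊t / d⌋₊))
  intro p hp
  simp only [Set.mem_setOf_eq] at hp
  have h1 : (p.1 : ℝ) * c ≤ t := by nlinarith [mul_nonneg (Nat.cast_nonneg p.2) hd.le]
  have h2 : (p.2 : ℝ) * d ≤ t := by nlinarith [mul_nonneg (Nat.cast_nonneg p.1) hc.le]
  constructor
  · exact Nat.le_floor ((le_div_iff₀ hc).2 h1)
  · exact Nat.le_floor ((le_div_iff₀ hd).2 h2)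

lemma card_ge (c d t : ℝ) (hc : 0 < c) (hd : 0 < d) (m n : ℕ)
    (ht : (m : ℝ) * c + (n : ℝ) * d ≤ t) :
    (m + 1) * (n + 1) ≤ {p : ℕ × ℕ | (p.1 : ℝ) * c + (p.2 : ℝ) * d ≤ t}.ncard := by
  have hfin := finite_pairs c d t hc hd
  have hsub : ((Finset.range (m + 1) ×ˢ Finset.range (n + 1) : Finset (ℕ × ℕ)) : Set (ℕ × ℕ))
      ⊆ {p : ℕ × ℕ | (p.1 : ℝ) * c + (p.2 : ℝ) * d ≤ t} := by
    intro p hp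
    simp only [Finset.coe_product, Set.mem_prod, Finset.mem_coe, Finset.mem_range,
      Nat.lt_succ_iff] at hp
    have h1 : (p.1 : ℝ) ≤ (m : ℝ) := Nat.cast_le.2 hp.1
    have h2 : (p.2 : ℝ) ≤ (n : ℝ) := Nat.cast_le.2 hp.2
    have : (p.1 : ℝ) * c + (p.2 : ℝ) * d ≤ (m : ℝ) * c + (n : ℝ) * d := by gcongr
    exact le_trans this ht
  calc (m + 1) * (n + 1)
      = ((Finset.range (m + 1) ×ˢ Finset.range (n + 1) : Finset (ℕ × ℕ)) : Set (ℕ × ℕ)).ncard := by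
        rw [Set.ncard_coe_finset, Finset.card_product, Finset.card_range, Finset.card_range]
    _ ≤ _ := Set.ncard_le_ncard hsub hfin

lemma Nset_bddBelow (a b : ℝ) (k : ℕ) :
    BddBelow {t : ℝ | 0 ≤ t ∧ k + 1 ≤ {p : ℕ × ℕ | (p.1 : ℝ) * a + (p.2 : ℝ) * b ≤ t}.ncard} :=
  ⟨0, fun _ hx => hx.1⟩

lemma Nseq_le_of (a : ℝ) (ha : 0 < a) (k m n : ℕ) (hk : k + 1 ≤ (m + 1) * (n + 1)) :
    Nseq 1 a k ≤ (m : ℝ) + (n : ℝ) * a := by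
  apply csInf_le (Nset_bddBelow 1 a k)
  refine ⟨by positivity, le_trans hk ?_⟩
  exact card_ge 1 a _ one_pos ha m n (le_of_eq (by ring))

lemma Nseq_nonneg (a b : ℝ) (k : ℕ) : 0 ≤ Nseq a b k :=
  Real.sInf_nonneg (fun _ hx => hx.1)

lemma Nset_nonempty (a : ℝ) (ha : 0 < a) (k : ℕ) :
    ((k : ℝ)) ∈ {t : ℝ | 0 ≤ t ∧ k + 1 ≤ {p : ℕ × ℕ | (p.1 : ℝ) * 1 + (p.2 : ℝ) * a ≤ t}.ncard} := by
  refine ⟨Nat.cast_nonneg k, ?_⟩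
  have := card_ge 1 a (k : ℝ) one_pos ha k 0 (le_of_eq (by push_cast; ring))
  simpa using this

lemma Nseq_scale (a lam : ℝ) (ha : 0 < a) (hlam : 1 ≤ lam) (k : ℕ) :
    Nseq 1 (lam * a) k ≤ lam * Nseq 1 a k := by
  have hlam0 : 0 < lam := lt_of_lt_of_le one_pos hlam
  set S₁ := {t : ℝ | 0 ≤ t ∧ k + 1 ≤ {p : ℕ × ℕ | (p.1 : ℝ) * 1 + (p.2 : ℝ) * a ≤ t}.ncard}
    with hS₁
  have key : ∀ t ∈ S₁, Nseq 1 (lam * a) k ≤ lam * t := by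
    intro t ht
    apply csInf_le (Nset_bddBelow 1 (lam * a) k)
    have ht0 : 0 ≤ t := ht.1
    refine ⟨mul_nonneg hlam0.le ht0, ?_⟩
    refine le_trans ht.2 (Set.ncard_le_ncard ?_ (finite_pairs 1 (lam * a) (lam * t) one_pos
      (by positivity)))
    intro p hp
    simp only [Set.mem_setOf_eq] at hp ⊢
    have h1 : (0 : ℝ) ≤ p.1 := Nat.cast_nonneg _
    have h2 : (0 : ℝ) ≤ p.2 := Nat.cast_nonneg _
    nlinarith
  have hne : S₁.Nonempty := ⟨(k : ℝ), Nset_nonempty a ha k⟩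
  have h2 : Nseq 1 (lam * a) k / lam ≤ sInf S₁ := by
    apply le_csInf hne
    intro t ht
    rw [div_le_iff₀ hlam0]
    linarith [key t ht]
  have h3 : Nseq 1 (lam * a) k ≤ sInf S₁ * lam := (div_le_iff₀ hlam0).1 h2
  have he : Nseq 1 a k = sInf S₁ := rfl
  rw [he]
  linarith

lemma Nseq_le_a_mul_Mseq (a b : ℝ) (ha : 1 ≤ a) (hb : 1 ≤ b) (k : ℕ) :
    Nseq 1 a k ≤ a * Mseq 1 b k := by
  have ha0 : 0 < a := lt_of_lt_of_le one_pos ha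
  set M := {t : ℝ | ∃ m n : ℕ, k + 1 ≤ (m + 1) * (n + 1) ∧ t = (m : ℝ) * 1 + (n : ℝ) * b} with hM
  have hne : M.Nonempty := ⟨(k : ℝ), k, 0, by nlinarith, by push_cast; ring⟩
  have key : ∀ t ∈ M, Nseq 1 a k ≤ a * t := by
    rintro t ⟨m, n, hmn, rfl⟩
    have h1 := Nseq_le_of a ha0 k m n hmn
    have hm : (0 : ℝ) ≤ m := Nat.cast_nonneg _
    have hn : (0 : ℝ) ≤ n := Nat.cast_nonneg _
    nlinarith [mul_nonneg hn (mul_nonneg ha0.le (sub_nonneg.2 hb))]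
  have h2 : Nseq 1 a k / a ≤ sInf M := by
    apply le_csInf hne
    intro t ht
    rw [div_le_iff₀ ha0, mul_comm]
    exact key t ht
  have h3 : Nseq 1 a k ≤ sInf M * a := (div_le_iff₀ ha0).1 h2
  have : Mseq 1 b k = sInf M := rfl
  rw [this, mul_comm]
  exact h3

theorem dFun_subscaling (a b lam : ℝ) (ha : 1 ≤ a) (hb : 1 ≤ b) (hlam : 1 ≤ lam) :
    dFun (lam * a) b ≤ lam * dFun a b := by
  have ha0 : 0 < a := lt_of_lt_of_le one_pos ha
  have hlam0 : 0 < lam := lt_of_lt_of_le one_pos hlam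
  set S := {l : ℝ | 0 < l ∧ ∀ k : ℕ, Nseq 1 a k ≤ l * Mseq 1 b k} with hS
  set S' := {l : ℝ | 0 < l ∧ ∀ k : ℕ, Nseq 1 (lam * a) k ≤ l * Mseq 1 b k} with hS'
  have haS : a ∈ S := ⟨ha0, fun k => Nseq_le_a_mul_Mseq a b ha hb k⟩
  have hbdd' : BddBelow S' := ⟨0, fun l hl => hl.1.le⟩
  have key : ∀ l ∈ S, sInf S' ≤ lam * l := by
    intro l hl
    apply csInf_le hbdd'
    refine ⟨mul_pos hlam0 hl.1, ?_⟩
    intro k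
    calc Nseq 1 (lam * a) k ≤ lam * Nseq 1 a k := Nseq_scale a lam ha0 hlam k
      _ ≤ lam * (l * Mseq 1 b k) := by
          exact mul_le_mul_of_nonneg_left (hl.2 k) hlam0.le
      _ = lam * l * Mseq 1 b k := by ring
  have h2 : sInf S' / lam ≤ sInf S := by
    apply le_csInf ⟨a, haS⟩
    intro l hl
    rw [div_le_iff₀ hlam0]
    linarith [key l hl]
  have h3 : sInf S' ≤ sInf S * lam := (div_le_iff₀ hlam0).1 h2
  have e1 : dFun (lam * a) b = sInf S' := rfl
  have e2 : dFun a b = sInf S := rfl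
  rw [e1, e2]
  linarith
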